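/- arXiv:2510.19416 — 2 statements merged into one kernel-verified Lean document; each statement's English description precedes it below -/
import Mathlib

section
/- Let V_N : ℕ × S → ℝ be optimal value functions on horizons N ∈ ℕ for a time-varying control system, satisfying the dynamic programming principle: for an optimal control on horizon N with trajectory x^*(·) starting from (j, x), V_N(j, x) = J_M(j, x, u^*) + V_{N−M}(j+M, x^*(M)) for all 0 ≤ M ≤ N, where J_M denotes the cost accumulated over the first M steps. Suppose u is any admissible M-step control from (j,x) with terminal state y, and that |V_{N−M}(j+M, y) − V_{N−M}(j+M, x^s(j+M))| ≤ ε and |V_{N−M}(j+M, x^s(j+M)) − V_{N−M}(j+M, x^*(M))| ≤ ε. Then J_M(j, x, u^*) ≤ J_M(j, x, u) + 2ε. -/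
/-- Near-optimality of initial pieces of optimal trajectories: using the dynamic
programming identity and continuity residuals bounded by ε, the truncated optimal
cost exceeds any competitor's cost by at most 2ε. -/
theorem stmt4 {Ctrl : Type*} (JM : Ctrl → ℝ) (Vterm : Ctrl → ℝ)
    (VN Vxs ε : ℝ) (ustar : Ctrl)
    (hDPP : VN = JM ustar + Vterm ustar)
    (hsub : ∀ u, VN ≤ JM u + Vterm u)
    (u : Ctrl)
    (h1 : |Vterm u - Vxs| ≤ ε) (h2 : |Vxs - Vterm ustar| ≤ ε) :
    JM ustar ≤ JM u + 2 * ε := by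
  have h := hsub u
  rw [hDPP] at h
  have a1 := abs_le.mp h1
  have a2 := abs_le.mp h2
  linarith [a1.2, a2.2]
end

section
/- Let η be a class-K∞ function, ν ≥ 0, δ := max{η^{-1}(2ν), η^{-1}(ν) + ν}, and suppose V, V⁺ ≥ 0 satisfy V⁺ ≤ V − η(V) + ν. Then: (a) if V ≤ δ then V⁺ ≤ δ; and (b) if V > δ then V⁺ ≤ V − η(V)/2. -/
/-- Forward invariance and practical decrease: if V⁺ ≤ V - η(V) + ν with η
class-K∞ and δ = max{η⁻¹(2ν), η⁻¹(ν) + ν}, then the sublevel set {V ≤ δ} is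
invariant, and for V > δ the strict decrease V⁺ ≤ V - η(V)/2 holds. -/
theorem stmt5 (η ηinv : ℝ → ℝ)
    (hη : StrictMono η) (hη0 : η 0 = 0) (hηc : Continuous η)
    (hηinf : Filter.Tendsto η Filter.atTop Filter.atTop)
    (hinv1 : ∀ r, 0 ≤ r → η (ηinv r) = r) (hinv2 : ∀ r, 0 ≤ r → ηinv (η r) = r)
    (ν V Vp : ℝ) (hν : 0 ≤ ν) (hV : 0 ≤ V) (hVp : 0 ≤ Vp)
    (hdec : Vp ≤ V - η V + ν)
    (δ : ℝ) (hδ : δ = max (ηinv (2 * ν)) (ηinv ν + ν)) :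
    (V ≤ δ → Vp ≤ δ) ∧ (δ < V → Vp ≤ V - η V / 2) := by
  have hηV : 0 ≤ η V := by
    have := hη.le_iff_le.mpr hV
    rwa [hη0] at this
  constructor
  · intro hVδ
    rcases le_or_gt ν (η V) with h | h
    · linarith
    · -- η V < ν, so V ≤ ηinv ν
      have hVle : V ≤ ηinv ν := by
        have h1 : η V ≤ η (ηinv ν) := by rw [hinv1 ν hν]; exact h.le
        have := hη.le_iff_le.mp h1
        exact this
      have : Vp ≤ ηinv ν + ν := by linarith
      rw [hδ]
      exact le_trans this (le_max_right _ _)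
  · intro hδV
    have h2ν : 2 * ν ≤ η V := by
      have h1 : ηinv (2 * ν) < V := lt_of_le_of_lt (hδ ▸ le_max_left _ _) hδV
      have := hη.le_iff_le.mpr h1.le
      rwa [hinv1 (2 * ν) (by linarith)] at this
    linarith
end
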